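/- Let R be a commutative ring of prime characteristic p, and let 𝔞, 𝔫 be ideals of R with 𝔫^[Q′] = 0 for some power Q′ of p. Suppose that in R/𝔫 we have (((𝔞+𝔫)/𝔫)^F)^[Q̃] = ((𝔞+𝔫)/𝔫)^[Q̃] for some power Q̃ of p. Then (𝔞^F)^[Q′Q̃] = 𝔞^[Q′Q̃]. -/

import Mathlib

/-!
If `r ∈ 𝔞^F`, its image lies in the Frobenius closure of `𝔞(R/𝔫)`, so by hypothesis
`r^Q̃ ≡ s (mod 𝔫)` for some `s ∈ 𝔞^[Q̃]`. Raising to the `Q′`-th power is additive and kills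
`𝔫`, hence `r^{Q′Q̃} = s^{Q′} ∈ (𝔞^[Q̃])^[Q′] = 𝔞^[Q′Q̃]`.
-/

def frobPow {R : Type*} [CommRing R] (S : Set R) (q : ℕ) : Ideal R :=
  Ideal.span ((· ^ q) '' S)

def frobClosure {R : Type*} [CommRing R] (p : ℕ) (I : Ideal R) : Set R :=
  {r | ∃ n : ℕ, r ^ p ^ n ∈ frobPow (I : Set R) (p ^ n)}

section

variable {R S : Type*} [CommRing R] [CommRing S]

theorem frobPow_le_iff {T : Set R} {q : ℕ} {J : Ideal R} :
    frobPow T q ≤ J ↔ ∀ x ∈ T, x ^ q ∈ J := by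
  rw [frobPow, Ideal.span_le, Set.image_subset_iff]
  rfl

theorem pow_mem_frobPow {T : Set R} {x : R} (hx : x ∈ T) (q : ℕ) : x ^ q ∈ frobPow T q :=
  Ideal.subset_span ⟨x, hx, rfl⟩

theorem frobPow_mono {T U : Set R} (hTU : T ⊆ U) (q : ℕ) : frobPow T q ≤ frobPow U q :=
  Ideal.span_mono (Set.image_mono hTU)

theorem subset_frobClosure (p : ℕ) (I : Ideal R) : (I : Set R) ⊆ frobClosure p I :=
  fun x hx => ⟨0, by simpa using pow_mem_frobPow hx 1⟩

theorem map_frobPow (f : R →+* S) (T : Set R) (q : ℕ) :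
    (frobPow T q).map f = frobPow (f '' T) q := by
  simp only [frobPow, Ideal.map_span, Set.image_image, map_pow]

theorem frobPow_map_of_surjective {f : R →+* S} (hf : Function.Surjective f) (I : Ideal R)
    (q : ℕ) : frobPow (I.map f : Set S) q = (frobPow I q).map f := by
  refine le_antisymm (frobPow_le_iff.2 fun y hy => ?_) ?_
  · obtain ⟨x, hx, rfl⟩ := (Ideal.mem_map_iff_of_surjective f hf).1 hy
    rw [← map_pow]
    exact Ideal.mem_map_of_mem f (pow_mem_frobPow hx q)
  · rw [map_frobPow]
    exact frobPow_mono (Set.image_subset_iff.2 fun x => Ideal.mem_map_of_mem f) q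

theorem map_mem_frobClosure_map (f : R →+* S) {p : ℕ} {I : Ideal R} {r : R}
    (hr : r ∈ frobClosure p I) : f r ∈ frobClosure p (I.map f) := by
  obtain ⟨n, hn⟩ := hr
  refine ⟨n, ?_⟩
  rw [← map_pow]
  refine frobPow_mono (Set.image_subset_iff.2 fun x => Ideal.mem_map_of_mem f) _ ?_
  rw [← map_frobPow]
  exact Ideal.mem_map_of_mem f hn

variable (p : ℕ) [ExpChar R p]

theorem frobPow_expChar_pow (I : Ideal R) (n : ℕ) :
    frobPow I (p ^ n) = I.map (iterateFrobenius R p n) :=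
  rfl

theorem frobPow_frobPow (T : Set R) (q n : ℕ) :
    frobPow (frobPow T q) (p ^ n) = frobPow T (q * p ^ n) := by
  rw [frobPow_expChar_pow, frobPow, Ideal.map_span, Set.image_image]
  simp only [iterateFrobenius_def, ← pow_mul]
  rfl

theorem pow_expChar_pow_eq_of_sub_mem {𝔫 : Ideal R} {e : ℕ}
    (h𝔫 : frobPow (𝔫 : Set R) (p ^ e) = ⊥) {x y : R} (hxy : x - y ∈ 𝔫) :
    x ^ p ^ e = y ^ p ^ e := by
  rw [← sub_eq_zero, ← sub_pow_expChar_pow, ← Ideal.mem_bot, ← h𝔫]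
  exact pow_mem_frobPow hxy _

theorem pow_mem_frobPow_of_mk_mem_map {𝔫 : Ideal R} {e : ℕ}
    (h𝔫 : frobPow (𝔫 : Set R) (p ^ e) = ⊥) {J : Ideal R} {x : R}
    (hx : Ideal.Quotient.mk 𝔫 x ∈ J.map (Ideal.Quotient.mk 𝔫)) :
    x ^ p ^ e ∈ frobPow J (p ^ e) := by
  obtain ⟨y, hy, hyx⟩ := (Ideal.mem_map_iff_of_surjective _ Ideal.Quotient.mk_surjective).1 hx
  rw [pow_expChar_pow_eq_of_sub_mem p h𝔫 (Ideal.Quotient.eq.1 hyx.symm)]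
  exact pow_mem_frobPow hy _

end

/-- if `𝔫^{[Q′]} = 0` and `(((𝔞+𝔫)/𝔫)^F)^{[Q̃]} = ((𝔞+𝔫)/𝔫)^{[Q̃]}` in
`R/𝔫`, then `(𝔞^F)^{[Q′Q̃]} = 𝔞^{[Q′Q̃]}`. -/
theorem frobClosure_of_quotient {R : Type*} [CommRing R] (p : ℕ) (hp : p.Prime)
    [CharP R p] (𝔞 𝔫 : Ideal R) (e' et : ℕ)
    (h𝔫 : frobPow (𝔫 : Set R) (p ^ e') = ⊥)
    (h : frobPow (frobClosure p (𝔞.map (Ideal.Quotient.mk 𝔫))) (p ^ et) =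
        frobPow ((𝔞.map (Ideal.Quotient.mk 𝔫) : Ideal (R ⧸ 𝔫)) : Set (R ⧸ 𝔫)) (p ^ et)) :
    frobPow (frobClosure p 𝔞) (p ^ e' * p ^ et) = frobPow (𝔞 : Set R) (p ^ e' * p ^ et) := by
  have : ExpChar R p := .prime hp
  refine le_antisymm (frobPow_le_iff.2 fun r hr => ?_) (frobPow_mono (subset_frobClosure p 𝔞) _)
  have hr_bar :
      Ideal.Quotient.mk 𝔫 (r ^ p ^ et) ∈ (frobPow 𝔞 (p ^ et)).map (Ideal.Quotient.mk 𝔫) := by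
    rw [← frobPow_map_of_surjective Ideal.Quotient.mk_surjective, ← h, map_pow]
    exact pow_mem_frobPow (map_mem_frobClosure_map _ hr) _
  have hr_pow := pow_mem_frobPow_of_mk_mem_map p h𝔫 hr_bar
  rwa [frobPow_frobPow, ← pow_mul, mul_comm] at hr_pow
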